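/- If v_1 ≠ v_n and s* is the largest integer with Δ(s*) ≥ 0 (where Δ is the increment of maximal coalition gains), then 2 ≤ s* ≤ ⌊n/2 + 1⌋; moreover if s** is the largest integer with δ(s**) ≥ 0 (per-capita increments) then 2 ≤ s** ≤ s* and s** ≤ ⌈√n⌉. -/

import Mathlib

/-!
Write `a_s = shortfall n v s = ∑_{i ∈ S_s} (v_1 - v_i)`, so that `v_g(S_s) = (n - s) a_s / n²`,
and let `d = v_1 - v_{n+1-s}` be the shortfall of the member that joins `S_s` to form `S_{s+1}`.
Then `n² Δ(s+1) = (n - s - 1) d - a_s` and `n² s (s+1) δ(s+1) = s (n - s - 1) d - n a_s`.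
Every member of `S_s` other than `1` falls short of `v_1` by at least `d`, so `a_s ≥ (s - 1) d`,
and `a_s > 0` for `s ≥ 2` because `v_n < v_1`. Hence `Δ(s+1) < 0` once `n < 2s` and
`δ(s+1) < 0` once `n < s (s + 1)`, while `a_1 = 0` makes `Δ(2)` and `δ(2)` nonnegative.
-/

open Finset

/-- The gain game: worth of a coalition `S` among `n` agents with valuations `v`. -/
noncomputable def vg (n : ℕ) (v : ℕ → ℝ) (S : Finset ℕ) : ℝ :=
  if h : S.Nonempty then
    ((n : ℝ) - S.card) / (n : ℝ) ^ 2 * ∑ i ∈ S, (S.sup' h v - v i)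
  else 0

/-- The maximal-gain coalition of cardinality `s`: `S_s = {1} ∪ {n+2-s, …, n}`
(which equals `{1}` for `s = 1`). -/
def Ss (n s : ℕ) : Finset ℕ := insert 1 (Finset.Icc (n + 2 - s) n)

/-- The increment of maximal coalition gains. -/
noncomputable def Delta (n : ℕ) (v : ℕ → ℝ) (s : ℕ) : ℝ :=
  vg n v (Ss n s) - vg n v (Ss n (s - 1))

/-- The per-capita increment of maximal coalition gains. -/
noncomputable def delta (n : ℕ) (v : ℕ → ℝ) (s : ℕ) : ℝ :=
  vg n v (Ss n s) / s - vg n v (Ss n (s - 1)) / ((s : ℝ) - 1)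

lemma mul_lt_mul_of_mul_le {a c d k m : ℝ} (ha : 0 < a) (hd : 0 ≤ d) (hk : 0 < k)
    (hmd : m * d ≤ a) (hc : c < k * m) : c * d < k * a := by
  rcases hd.eq_or_lt with rfl | hd
  · simpa using mul_pos hk ha
  · calc c * d < k * m * d := mul_lt_mul_of_pos_right hc hd
      _ = k * (m * d) := mul_assoc _ _ _
      _ ≤ k * a := mul_le_mul_of_nonneg_left hmd hk.le

noncomputable def shortfall (n : ℕ) (v : ℕ → ℝ) (s : ℕ) : ℝ :=
  ∑ i ∈ Icc (n + 2 - s) n, (v 1 - v i)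

section

variable {n : ℕ} {v : ℕ → ℝ} {s : ℕ}

@[simp]
lemma shortfall_one : shortfall n v 1 = 0 := by
  simp [shortfall]

lemma shortfall_succ (hs : 1 ≤ s) (hsn : s ≤ n) :
    shortfall n v (s + 1) = shortfall n v s + (v 1 - v (n + 1 - s)) := by
  have hIcc : Icc (n + 2 - (s + 1)) n = insert (n + 1 - s) (Icc (n + 2 - s) n) := by
    rw [show n + 2 - s = n + 1 - s + 1 by omega, insert_Icc_add_one_left_eq_Icc (by omega)]
    congr 1
    omega
  rw [shortfall, hIcc, sum_insert (by rw [mem_Icc]; omega), add_comm, shortfall]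

lemma shortfall_ge (hv : Antitone v) (hs : 1 ≤ s) (hsn : s ≤ n) :
    ((s : ℝ) - 1) * (v 1 - v (n + 1 - s)) ≤ shortfall n v s := by
  have h := card_nsmul_le_sum (Icc (n + 2 - s) n) (fun i ↦ v 1 - v i) (v 1 - v (n + 1 - s))
    fun i hi ↦ by
      rw [mem_Icc] at hi
      exact sub_le_sub_left (hv (by omega)) _
  rwa [Nat.card_Icc, show n + 1 - (n + 2 - s) = s - 1 by omega, nsmul_eq_mul,
    Nat.cast_sub hs, Nat.cast_one] at h

lemma shortfall_pos (hv : Antitone v) (hvn : v n < v 1) (hs : 2 ≤ s) (hsn : s ≤ n) :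
    0 < shortfall n v s :=
  (sub_pos.2 hvn).trans_le <|
    single_le_sum (f := fun i ↦ v 1 - v i)
      (fun i hi ↦ sub_nonneg.2 (hv (by rw [mem_Icc] at hi; omega)))
      (mem_Icc.2 ⟨by omega, le_rfl⟩)

lemma vg_Ss (hv : Antitone v) (hs : 1 ≤ s) (hsn : s ≤ n) :
    vg n v (Ss n s) = ((n : ℝ) - s) / (n : ℝ) ^ 2 * shortfall n v s := by
  have h1 : 1 ∉ Icc (n + 2 - s) n := by rw [mem_Icc]; omega
  have hne : (Ss n s).Nonempty := insert_nonempty _ _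
  have hsup : (Ss n s).sup' hne v = v 1 :=
    le_antisymm
      (sup'_le _ _ fun i hi ↦ hv (by rw [Ss, mem_insert, mem_Icc] at hi; omega))
      (le_sup' v (mem_insert_self _ _))
  have hcard : (Ss n s).card = s := by
    rw [Ss, card_insert_of_notMem h1, Nat.card_Icc]
    omega
  rw [vg, dif_pos hne, hsup, hcard, Ss, sum_insert h1, sub_self, zero_add, shortfall]

lemma Delta_succ (hv : Antitone v) (hs : 1 ≤ s) (hsn : s + 1 ≤ n) :
    Delta n v (s + 1) =
      (((n : ℝ) - (s + 1)) * (v 1 - v (n + 1 - s)) - shortfall n v s) / (n : ℝ) ^ 2 := by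
  rw [Delta, Nat.add_sub_cancel, vg_Ss hv (by omega) hsn, vg_Ss hv hs (by omega),
    shortfall_succ hs (by omega)]
  push_cast
  ring

lemma delta_succ (hv : Antitone v) (hs : 1 ≤ s) (hsn : s + 1 ≤ n) :
    delta n v (s + 1) =
      ((s : ℝ) * ((n : ℝ) - (s + 1)) * (v 1 - v (n + 1 - s)) - n * shortfall n v s) /
        ((n : ℝ) ^ 2 * s * (s + 1)) := by
  have hs0 : (s : ℝ) ≠ 0 := by exact_mod_cast (show s ≠ 0 by omega)
  have hn0 : (n : ℝ) ≠ 0 := by exact_mod_cast (show n ≠ 0 by omega)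
  rw [delta, Nat.add_sub_cancel, vg_Ss hv (by omega) hsn, vg_Ss hv hs (by omega),
    shortfall_succ hs (by omega)]
  push_cast
  rw [add_sub_cancel_right]
  field_simp
  ring

lemma Delta_succ_nonneg_iff (hv : Antitone v) (hs : 1 ≤ s) (hsn : s + 1 ≤ n) :
    0 ≤ Delta n v (s + 1) ↔
      shortfall n v s ≤ ((n : ℝ) - (s + 1)) * (v 1 - v (n + 1 - s)) := by
  have hn : (0 : ℝ) < (n : ℝ) ^ 2 := by
    have : (0 : ℝ) < n := by exact_mod_cast (show 0 < n by omega)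
    positivity
  rw [Delta_succ hv hs hsn, le_div_iff₀ hn, zero_mul, sub_nonneg]

lemma delta_succ_nonneg_iff (hv : Antitone v) (hs : 1 ≤ s) (hsn : s + 1 ≤ n) :
    0 ≤ delta n v (s + 1) ↔
      n * shortfall n v s ≤ (s : ℝ) * ((n : ℝ) - (s + 1)) * (v 1 - v (n + 1 - s)) := by
  have hpos : (0 : ℝ) < (n : ℝ) ^ 2 * s * (s + 1) := by
    have : (0 : ℝ) < n := by exact_mod_cast (show 0 < n by omega)
    have : (0 : ℝ) < s := by exact_mod_cast hs
    positivity
  rw [delta_succ hv hs hsn, le_div_iff₀ hpos, zero_mul, sub_nonneg]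

lemma Delta_two_nonneg (hv : Antitone v) (hn : 2 ≤ n) : 0 ≤ Delta n v 2 := by
  rw [Delta_succ_nonneg_iff hv le_rfl hn, shortfall_one]
  have hn' : (2 : ℝ) ≤ n := by exact_mod_cast hn
  exact mul_nonneg (by push_cast; linarith) (sub_nonneg.2 (hv (by omega)))

lemma delta_two_nonneg (hv : Antitone v) (hn : 2 ≤ n) : 0 ≤ delta n v 2 := by
  rw [delta_succ_nonneg_iff hv le_rfl hn, shortfall_one, mul_zero]
  have hn' : (2 : ℝ) ≤ n := by exact_mod_cast hn
  exact mul_nonneg (by push_cast; linarith) (sub_nonneg.2 (hv (by omega)))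

lemma Delta_succ_nonneg_of_delta_succ_nonneg (hv : Antitone v) (hs : 1 ≤ s)
    (hsn : s + 1 ≤ n) (h : 0 ≤ delta n v (s + 1)) : 0 ≤ Delta n v (s + 1) := by
  rw [delta_succ_nonneg_iff hv hs hsn] at h
  rw [Delta_succ_nonneg_iff hv hs hsn]
  have hn : (0 : ℝ) < n := by exact_mod_cast (show 0 < n by omega)
  have hsn' : (s : ℝ) + 1 ≤ n := by exact_mod_cast hsn
  have hgain : 0 ≤ ((n : ℝ) - (s + 1)) * (v 1 - v (n + 1 - s)) :=
    mul_nonneg (by linarith) (sub_nonneg.2 (hv (by omega)))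
  refine le_of_mul_le_mul_left (h.trans ?_) hn
  rw [mul_assoc]
  exact mul_le_mul_of_nonneg_right (by linarith) hgain

lemma Delta_succ_neg (hv : Antitone v) (hvn : v n < v 1) (hs : n < 2 * s)
    (hsn : s + 1 ≤ n) : Delta n v (s + 1) < 0 := by
  rw [← not_le, Delta_succ_nonneg_iff hv (by omega) hsn, not_le]
  have hs' : (n : ℝ) < 2 * s := by exact_mod_cast hs
  simpa using mul_lt_mul_of_mul_le (shortfall_pos hv hvn (by omega) (by omega))
    (sub_nonneg.2 (hv (by omega))) one_pos (shortfall_ge hv (by omega) (by omega))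
    (show (n : ℝ) - (s + 1) < 1 * ((s : ℝ) - 1) by linarith)

lemma delta_succ_neg (hv : Antitone v) (hvn : v n < v 1) (hs : n < s * (s + 1))
    (hsn : s + 1 ≤ n) : delta n v (s + 1) < 0 := by
  have hs2 : 2 ≤ s := by
    by_contra h
    interval_cases s <;> omega
  rw [← not_le, delta_succ_nonneg_iff hv (by omega) hsn, not_le]
  have hs' : (n : ℝ) < s * (s + 1) := by exact_mod_cast hs
  exact mul_lt_mul_of_mul_le (shortfall_pos hv hvn hs2 (by omega))
    (sub_nonneg.2 (hv (by omega))) (by exact_mod_cast (show 0 < n by omega))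
    (shortfall_ge hv (by omega) (by omega))
    (by nlinarith)

end

lemma lt_mul_succ_of_ceil_sqrt_le {n s : ℕ} (hn : 0 < n) (h : ⌈Real.sqrt n⌉₊ ≤ s) :
    n < s * (s + 1) := by
  rw [Nat.ceil_le, Real.sqrt_le_left (Nat.cast_nonneg s)] at h
  have h' : n ≤ s ^ 2 := by exact_mod_cast h
  rcases Nat.eq_zero_or_pos s with rfl | hs
  · omega
  · nlinarith

theorem bounds_on_maximal_coalitions (n : ℕ) (hn : 2 ≤ n) (v : ℕ → ℝ)
    (hv : ∀ i j, i ≤ j → v j ≤ v i) (hne : v 1 ≠ v n)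
    (sstar : ℕ) (hs2 : sstar ≤ n) (hs3 : 0 ≤ Delta n v sstar)
    (hs4 : ∀ s : ℕ, 2 ≤ s → s ≤ n → 0 ≤ Delta n v s → s ≤ sstar)
    (tstar : ℕ) (ht2 : tstar ≤ n) (ht3 : 0 ≤ delta n v tstar)
    (ht4 : ∀ s : ℕ, 2 ≤ s → s ≤ n → 0 ≤ delta n v s → s ≤ tstar) :
    2 ≤ sstar ∧ sstar ≤ n / 2 + 1 ∧ 2 ≤ tstar ∧ tstar ≤ sstar ∧ tstar ≤ ⌈Real.sqrt n⌉₊ := by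
  have hv' : Antitone v := fun i j h ↦ hv i j h
  have hvn : v n < v 1 := (hv 1 n (by omega)).lt_of_ne hne.symm
  have h2s : 2 ≤ sstar := hs4 2 le_rfl hn (Delta_two_nonneg hv' hn)
  have h2t : 2 ≤ tstar := ht4 2 le_rfl hn (delta_two_nonneg hv' hn)
  obtain ⟨s, rfl⟩ : ∃ s, sstar = s + 1 := ⟨sstar - 1, by omega⟩
  obtain ⟨t, rfl⟩ : ∃ t, tstar = t + 1 := ⟨tstar - 1, by omega⟩
  refine ⟨h2s, ?_, h2t, hs4 _ h2t ht2 ?_, ?_⟩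
  · by_contra h
    exact (Delta_succ_neg hv' hvn (by omega) hs2).not_ge hs3
  · exact Delta_succ_nonneg_of_delta_succ_nonneg hv' (by omega) ht2 ht3
  · by_contra h
    have hn_lt : n < t * (t + 1) := lt_mul_succ_of_ceil_sqrt_le (by omega) (by omega)
    exact (delta_succ_neg hv' hvn hn_lt ht2).not_ge ht3
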